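/- arXiv:2005.07103 — 2 statements merged into one kernel-verified Lean document; each statement's English description precedes it below -/
import Mathlib

section
/- Minimal obstructions obstruct cohomological connectedness. Let j ∈ {1,…,d−1} and j ≤ k ≤ d. If a simplicial complex G on [n] contains a 4-tuple (K,C,w,a) forming a copy of M̂_{j,k}, then H^j(G;R) ≠ 0. -/
open MeasureTheory Filter Finset Asymptotics
open scoped Classical

noncomputable section

namespace RSC

/-! ### Simplicial complexes on the vertex set `Fin N` -/

variable {N : ℕ}

/-- A simplicial complex on `[N]`: a downward-closed family of non-empty finite
subsets of the vertex set containing all singletons. -/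
def IsComplex (G : Set (Finset (Fin N))) : Prop :=
  (∀ A ∈ G, A.Nonempty) ∧ (∀ v : Fin N, ({v} : Finset (Fin N)) ∈ G) ∧
    ∀ A ∈ G, ∀ B : Finset (Fin N), B ⊆ A → B.Nonempty → B ∈ G

/-- A `d`-dimensional simplicial complex: no `(d+1)`-simplices, i.e. all faces have
at most `d+1` vertices. -/
def IsDComplex (d : ℕ) (G : Set (Finset (Fin N))) : Prop :=
  IsComplex G ∧ ∀ A ∈ G, A.card ≤ d + 1

/-- `σ` is an ordered simplex of `G` (on `m` vertices, i.e. of dimension `m-1`). -/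
def OrdSimp (G : Set (Finset (Fin N))) {m : ℕ} (σ : Fin m → Fin N) : Prop :=
  Function.Injective σ ∧ Finset.image σ Finset.univ ∈ G

/-- An `(m-1)`-dimensional cochain of `G` with coefficients in `R`: a function on
ordered `m`-tuples vanishing off the ordered simplices of `G` and changing sign
under transpositions of two vertices. -/
def IsCochain (G : Set (Finset (Fin N))) (m : ℕ) {R : Type} [AddCommGroup R]
    (f : (Fin m → Fin N) → R) : Prop :=
  (∀ σ : Fin m → Fin N, ¬ OrdSimp G σ → f σ = 0) ∧
    ∀ (σ : Fin m → Fin N) (a b : Fin m), a ≠ b → f (σ ∘ Equiv.swap a b) = - f σ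

/-- The coboundary of a function on ordered `m`-tuples. -/
def delta {R : Type} [AddCommGroup R] {m : ℕ} (g : (Fin m → Fin N) → R) :
    (Fin (m + 1) → Fin N) → R :=
  fun σ => ∑ i : Fin (m + 1), (-1 : ℤ) ^ (i : ℕ) • g (σ ∘ i.succAbove)

/-- An `(m-1)`-dimensional cocycle: a cochain whose coboundary vanishes on all
ordered `(m+1)`-tuples forming simplices of `G`. -/
def IsCocycle (G : Set (Finset (Fin N))) (m : ℕ) {R : Type} [AddCommGroup R]
    (f : (Fin m → Fin N) → R) : Prop :=
  IsCochain G m f ∧ ∀ σ : Fin (m + 1) → Fin N, OrdSimp G σ → delta f σ = 0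

/-- `f` (a function on ordered `(m+1)`-tuples) is an `m`-dimensional coboundary:
on the ordered simplices of `G` it agrees with the coboundary of an
`(m-1)`-dimensional cochain. -/
def IsCobound (G : Set (Finset (Fin N))) (m : ℕ) {R : Type} [AddCommGroup R]
    (f : (Fin (m + 1) → Fin N) → R) : Prop :=
  ∃ g : (Fin m → Fin N) → R, IsCochain G m g ∧
    ∀ σ : Fin (m + 1) → Fin N, OrdSimp G σ → f σ = delta g σ

/-- The support of a cochain: the unordered simplices on which it does not vanish. -/
def cochainSupport {R : Type} [AddCommGroup R] {m : ℕ} (f : (Fin m → Fin N) → R) :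
    Set (Finset (Fin N)) :=
  {A | ∃ σ : Fin m → Fin N, Function.Injective σ ∧ Finset.image σ Finset.univ = A ∧ f σ ≠ 0}

/-- `H^j(G;R) = 0`: every `j`-cocycle is a `j`-coboundary. -/
def HTrivial (G : Set (Finset (Fin N))) (R : Type) [AddCommGroup R] (j : ℕ) : Prop :=
  ∀ f : (Fin (j + 1) → Fin N) → R, IsCocycle G (j + 1) f → IsCobound G j f

/-- Topological connectedness (equivalently `H^0(G;R) = R`): any two vertices are
joined by a sequence of vertices in which consecutive vertices share a simplex. -/
def TopConnected (G : Set (Finset (Fin N))) : Prop :=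
  ∀ u v : Fin N, Relation.ReflTransGen (fun x y => ∃ A ∈ G, x ∈ A ∧ y ∈ A) u v

/-- `R`-cohomological `j`-connectedness: `H^0(G;R) = R` and `H^i(G;R) = 0` for
all `1 ≤ i ≤ j`. -/
def CohomConnected (G : Set (Finset (Fin N))) (R : Type) [AddCommGroup R] (j : ℕ) : Prop :=
  TopConnected G ∧ ∀ i : ℕ, 1 ≤ i → i ≤ j → HTrivial G R i

/-- `A` is a `j`-shell of `G`: a `(j+2)`-set all of whose `(j+1)`-subsets are
`j`-simplices of `G`. -/
def IsShell (G : Set (Finset (Fin N))) (j : ℕ) (A : Finset (Fin N)) : Prop :=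
  A.card = j + 2 ∧ ∀ B ⊆ A, B.card = j + 1 → B ∈ G

/-- The `j`-flower in `K` with centre `C`: the petals `C ∪ {w}`, `w ∈ K \ C`. -/
def flower (K C : Finset (Fin N)) : Set (Finset (Fin N)) :=
  {P | ∃ w ∈ K, w ∉ C ∧ P = insert w C}

/-- `(K, C)` is a copy of `M_{j,k}` in `G`. -/
def IsCopyM (G : Set (Finset (Fin N))) (j k : ℕ) (K C : Finset (Fin N)) : Prop :=
  K ∈ G ∧ K.card = k + 1 ∧ C ⊆ K ∧ C.card = j ∧
    (∀ σ ∈ G, (∃ w ∈ K, w ∉ C ∧ insert w C ⊆ σ) → σ ⊆ K) ∧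
    (k = j → ∀ x ∈ C, ∀ y ∈ K, y ∉ C → x < y)

/-- `(K, C, w, a)` is a copy of `M̂_{j,k}` in `G`. -/
def IsCopyMhat (G : Set (Finset (Fin N))) (j k : ℕ) (K C : Finset (Fin N)) (w a : Fin N) :
    Prop :=
  IsCopyM G j k K C ∧ w ∈ K ∧ w ∉ C ∧ a ∉ K ∧
    IsShell G j (insert a (insert w C)) ∧ (k = j → ∀ x ∈ K, x ≤ w)

/-- `G + B`: adding the set `B` together with its downward closure to `G`. -/
def addSet (G : Set (Finset (Fin N))) (B : Finset (Fin N)) : Set (Finset (Fin N)) :=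
  G ∪ {A | A.Nonempty ∧ A ⊆ B}

/-- `J` is `K`-localised: every simplex of `G` containing `J` is contained in `K`. -/
def KLocalised (G : Set (Finset (Fin N))) (K J : Finset (Fin N)) : Prop :=
  ∀ σ ∈ G, J ⊆ σ → σ ⊆ K

/-- A `k`-simplex `K` is a local `j`-obstacle: it contains at least `k - j + 1`
many `K`-localised `j`-simplices. -/
def LocalObstacle (G : Set (Finset (Fin N))) (j k : ℕ) (K : Finset (Fin N)) : Prop :=
  K ∈ G ∧ K.card = k + 1 ∧
    k - j + 1 ≤ {J : Finset (Fin N) | J ⊆ K ∧ J.card = j + 1 ∧ J ∈ G ∧ KLocalised G K J}.ncard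

/-- The number of copies of `M_{j,k}` in `G`. -/
def countM (j k : ℕ) (G : Set (Finset (Fin N))) : ℕ :=
  Set.ncard {KC : Finset (Fin N) × Finset (Fin N) | IsCopyM G j k KC.1 KC.2}

/-! ### The random model: independent uniform birth times -/

/-- The sample space: a birth time for each set of vertices. -/
abbrev Omega (n : ℕ) : Type := Finset (Fin n) → ℝ

/-- The probability measure: independent `Uniform[0,1]` birth times. -/
def P (n : ℕ) : Measure (Omega n) :=
  Measure.pi fun _ => volume.restrict (Set.Icc (0 : ℝ) 1)

/-- An event holds with high probability. -/
def WHP (E : (n : ℕ) → Set (Omega n)) : Prop :=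
  Tendsto (fun n => P n (E n)) atTop (nhds 1)

/-- The random `d`-complex determined by birth times `ω`: all singletons together
with the downward closure of all sets `K` with `2 ≤ |K| ≤ d+1` whose birth time is
at most `p (|K| - 1)`; i.e. the downward closure of the non-uniform binomial
random hypergraph `G(n,p)`. -/
def birthComplex (d n : ℕ) (p : ℕ → ℝ) (ω : Omega n) : Set (Finset (Fin n)) :=
  {A | A.Nonempty ∧ (A.card = 1 ∨ ∃ K : Finset (Fin n),
    A ⊆ K ∧ 2 ≤ K.card ∧ K.card ≤ d + 1 ∧ ω K ≤ p (K.card - 1))}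

/-- The process `𝒢_τ = 𝒢(n, τ p̄)`: the complex of all simplices with scaled birth
time at most `τ`. -/
def Gproc (d : ℕ) (p : ℕ → ℕ → ℝ) (n : ℕ) (τ : ℝ) (ω : Omega n) : Set (Finset (Fin n)) :=
  birthComplex d n (fun k => τ * p n k) ω

/-- `G` contains a copy of `M̂_{j,k}` for some `j ≤ k ≤ d`. -/
def ContainsMhat (d j : ℕ) {n : ℕ} (G : Set (Finset (Fin n))) : Prop :=
  ∃ k, j ≤ k ∧ k ≤ d ∧ ∃ K C : Finset (Fin n), ∃ w a : Fin n, IsCopyMhat G j k K C w a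

/-- The hitting time `τ_j^*` for the disappearance of the last minimal obstruction. -/
def tstar (d j : ℕ) (p : ℕ → ℕ → ℝ) (n : ℕ) (ω : Omega n) : ℝ :=
  sSup {τ : ℝ | 0 ≤ τ ∧ ContainsMhat d j (Gproc d p n τ ω)}

/-! ### Directions and their parameters -/

/-- A direction `p̄` together with its parametrisation `ᾱ, β̄, γ̄`
(`p k n` is `p̄_k(n)`, `β n k` is `β̄_k(n)`). -/
structure DirData where
  p : ℕ → ℕ → ℝ
  α : ℕ → ℝ
  β : ℕ → ℕ → ℝ
  γ : ℕ → ℝ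

/-- `j`-admissibility of a direction (Definition 2.3). -/
def IsAdmissible (d j : ℕ) (D : DirData) : Prop :=
  (∀ n k, 0 ≤ D.p n k) ∧
  (∀ k, 1 ≤ k → k ≤ d → ∀ n : ℕ,
    D.p n k = (D.α k * Real.log n + D.β n k) / (n : ℝ) ^ ((k : ℝ) - (j : ℝ) + D.γ k)
      * (Nat.factorial (k - j) : ℝ)) ∧
  (∀ k, 1 ≤ k → k ≤ d → (D.α k = 0 ∨ D.γ k = 0) ∧ 0 ≤ D.α k ∧ 0 ≤ D.γ k) ∧
  (∀ k, 1 ≤ k → k ≤ d → D.α k = 0 →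
    (∀ n, D.β n k = 0) ∨ ((∀ n, 0 < D.β n k) ∧ ∀ ε : ℝ, 0 < ε →
      ((fun n => D.β n k) =o[atTop] fun n : ℕ => (n : ℝ) ^ ε) ∧
      ((fun n : ℕ => (n : ℝ) ^ (-ε)) =o[atTop] fun n => D.β n k))) ∧
  (∀ k, 1 ≤ k → k ≤ d → D.γ k = 0 →
    (fun n => |D.β n k|) =o[atTop] fun n : ℕ => Real.log n) ∧
  (∃ k, j + 1 ≤ k ∧ k ≤ d ∧ 0 < D.α k)

/-- `λ_k`, computed from parameter functions. -/
def lamP (d j : ℕ) (α γ : ℕ → ℝ) (k : ℕ) : ℝ :=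
  (j : ℝ) + 1 - γ k - ((k : ℝ) - (j : ℝ) + 1) * ∑ i ∈ Finset.Icc (j + 1) d, α i

/-- `μ_k`, computed from parameter functions. -/
def muP (d j : ℕ) (α : ℕ → ℝ) (β : ℕ → ℕ → ℝ) (γ : ℕ → ℝ) (p : ℕ → ℕ → ℝ)
    (n k : ℕ) : ℝ :=
  -(((k : ℝ) - (j : ℝ) + 1) * ∑ i ∈ Finset.Icc (j + 1) d, β n i / (n : ℝ) ^ (γ i)) +
    (if 1 < p n k then 0
     else if α k ≠ 0 then Real.log (Real.log n)
     else Real.log (β n k))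

/-- `ν_k`, computed from parameter functions. -/
def nuP (j : ℕ) (α : ℕ → ℝ) (k : ℕ) : ℝ :=
  if k = j then -Real.log (Nat.factorial (j + 1) : ℝ)
  else if α k ≠ 0 then
    -Real.log (Nat.factorial j : ℝ) - Real.log ((k : ℝ) - (j : ℝ) + 1) + Real.log (α k)
  else -Real.log (Nat.factorial j : ℝ) - Real.log ((k : ℝ) - (j : ℝ) + 1)

def DirData.lam (D : DirData) (d j k : ℕ) : ℝ := lamP d j D.α D.γ k

def DirData.mu (D : DirData) (d j : ℕ) (n k : ℕ) : ℝ := muP d j D.α D.β D.γ D.p n k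

def DirData.nu (D : DirData) (j k : ℕ) : ℝ := nuP j D.α k

/-- A `j`-critical direction (Definition 2.4). -/
def IsCriticalDirection (d j : ℕ) (D : DirData) : Prop :=
  IsAdmissible d j D ∧
  (∀ k, j ≤ k → k ≤ d → (∃ n, D.p n k ≠ 0) →
    ∀ᶠ n : ℕ in atTop, D.lam d j k * Real.log n + D.mu d j n k + D.nu j k ≤ 0) ∧
  ∃ k, j ≤ k ∧ k ≤ d ∧
    ∀ᶠ n : ℕ in atTop, D.lam d j k * Real.log n + D.mu d j n k + D.nu j k = 0

/-- `k` is a critical dimension of the `j`-critical direction `D`. -/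
def IsCriticalDim (d j : ℕ) (D : DirData) (k : ℕ) : Prop :=
  j ≤ k ∧ k ≤ d ∧ (∃ n, D.p n k ≠ 0) ∧ D.lam d j k = 0 ∧
    (fun n => D.mu d j n k) =O[atTop] fun _ : ℕ => (1 : ℝ)

/-- The quantity `ℰ = exp(-c(j+1)) ∑_{k ∈ 𝒞} exp(μ̄_k + ν̄_k + c γ̄_k)`. -/
def Ecal (d j : ℕ) (D : DirData) (c : ℝ) (n : ℕ) : ℝ :=
  Real.exp (-(c * ((j : ℝ) + 1))) *
    ∑ k ∈ Finset.Icc j d,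
      if IsCriticalDim d j D k then Real.exp (D.mu d j n k + D.nu j k + c * D.γ k) else 0

/-- `q̄ = ∏_{k=j+1}^d (1 - p̄_k)^{binom(n-j-1, k-j)}`. -/
def qbar (d j : ℕ) (D : DirData) (n : ℕ) : ℝ :=
  ∏ k ∈ Finset.Icc (j + 1) d, (1 - D.p n k) ^ (Nat.choose (n - j - 1) (k - j))

end RSC

end
namespace RSC

/-!
Fix `r ≠ 0` and an enumeration `e` of the centre `C`. The elementary `(j-1)`-cochain of `C`
(value `± r` on the orderings of `C`) has a coboundary supported on the petals `C ∪ {v}`; cutting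
it off outside `K` leaves a cochain `f` supported on the flower `F(K, C)`. It is a cocycle: on a
`(j+1)`-simplex inside `K`, `δf = δδ = 0`, and a `(j+1)`-simplex that is not inside `K` cannot
contain a petal, since the petals are `K`-localised. It is not a coboundary: of the faces of the
shell `C ∪ {w, a}` only `C ∪ {w}` lies in `K`, so `δf (a, w, e) = f (w, e) = r ≠ 0`, whereas
`δδg = 0` for every `g`.

The cochains are built as determinants, `σ ↦ det (φ (σ i) l) • r`, so that alternation is
`Matrix.det_permute` and the coboundary is the Laplace expansion along an added column of ones.
-/

section Coboundary

variable {N : ℕ} {R : Type} [AddCommGroup R]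

theorem delta_delta {m : ℕ} (g : (Fin m → Fin N) → R) (τ : Fin (m + 2) → Fin N) :
    delta (delta g) τ = 0 := by
  simp only [delta, Finset.smul_sum, smul_smul, ← pow_add, Function.comp_assoc]
  rw [← Finset.sum_product']
  -- `(i, l)` and `(i.succAbove l, l.predAbove i)` delete the same two vertices, with opposite signs.
  refine Finset.sum_ninvolution (fun p => (p.1.succAbove p.2, p.2.predAbove p.1))
    (fun p => ?_) (fun p _ => ?_) (fun _ => Finset.mem_univ _) (fun p => ?_)
  · have hface : (p.1.succAbove p.2).succAbove ∘ (p.2.predAbove p.1).succAbove =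
        p.1.succAbove ∘ p.2.succAbove :=
      funext (Fin.succAbove_succAbove_succAbove_predAbove p.1 p.2)
    rw [hface, Fin.neg_one_pow_succAbove_add_predAbove, neg_smul, add_neg_cancel]
  · exact fun h => Fin.succAbove_ne p.1 p.2 (congrArg Prod.fst h)
  · exact Prod.ext (Fin.succAbove_succAbove_predAbove p.1 p.2)
      (Fin.predAbove_predAbove_succAbove p.1 p.2)

theorem delta_congr {m : ℕ} {f g : (Fin m → Fin N) → R} {τ : Fin (m + 1) → Fin N}
    (h : ∀ i : Fin (m + 1), f (τ ∘ i.succAbove) = g (τ ∘ i.succAbove)) :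
    delta f τ = delta g τ :=
  Finset.sum_congr rfl fun i _ => by rw [h i]

theorem delta_cons {m : ℕ} {h : (Fin m → Fin N) → R} {x : Fin N}
    (hx : ∀ σ : Fin m → Fin N, x ∈ Set.range σ → h σ = 0) (ρ : Fin m → Fin N) :
    delta h (Fin.cons x ρ) = h ρ := by
  rw [delta, Fin.sum_univ_succ, Fin.succAbove_zero, Fin.cons_comp_succ, Fin.val_zero, pow_zero,
    one_smul, add_eq_left]
  refine Finset.sum_eq_zero fun i _ => ?_
  obtain ⟨k, hk⟩ := Fin.exists_succAbove_eq (Fin.succ_ne_zero i).symm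
  rw [hx _ ⟨k, by simp [hk]⟩, smul_zero]

end Coboundary

section DetCochain

variable {N m : ℕ} {R : Type} [AddCommGroup R]

def detCochain (φ : Fin N → Fin m → ℤ) (r : R) : (Fin m → Fin N) → R :=
  fun σ => (Matrix.of fun i => φ (σ i)).det • r

variable {φ : Fin N → Fin m → ℤ} {r : R}

theorem detCochain_comp_swap (σ : Fin m → Fin N) {a b : Fin m} (hab : a ≠ b) :
    detCochain φ r (σ ∘ Equiv.swap a b) = -detCochain φ r σ := by
  have h := Matrix.det_permute (Equiv.swap a b) (Matrix.of fun i => φ (σ i))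
  simp only [Equiv.Perm.sign_swap hab, Units.coe_neg_one, Int.cast_neg, Int.cast_one,
    neg_one_mul] at h
  rw [detCochain, detCochain, ← neg_smul, ← h]
  rfl

theorem injective_of_detCochain_ne_zero {σ : Fin m → Fin N} (h : detCochain φ r σ ≠ 0) :
    Function.Injective σ := by
  intro a b hab
  by_contra hne
  exact h (by rw [detCochain, Matrix.det_zero_of_row_eq hne (funext fun l => by simp [hab]),
    zero_smul])

theorem detCochain_eq_zero_of_row {σ : Fin m → Fin N} {i : Fin m} (hi : φ (σ i) = 0) :
    detCochain φ r σ = 0 := by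
  rw [detCochain, Matrix.det_eq_zero_of_row_eq_zero i (by simp [hi]), zero_smul]

theorem detCochain_eq_zero_of_column {σ : Fin m → Fin N} {l : Fin m}
    (hl : ∀ i, φ (σ i) l = 0) : detCochain φ r σ = 0 := by
  rw [detCochain, Matrix.det_eq_zero_of_column_eq_zero l (by simp [hl]), zero_smul]

theorem delta_detCochain :
    delta (detCochain φ r) = detCochain (fun v => Fin.cons 1 (φ v)) r := by
  funext σ
  rw [delta, detCochain, Matrix.det_succ_column_zero, Finset.sum_smul]
  refine Finset.sum_congr rfl fun i _ => ?_
  simp [detCochain, smul_smul, Matrix.submatrix]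

end DetCochain

theorem ordSimp_comp_succAbove_of_isShell {N m : ℕ} {G : Set (Finset (Fin N))}
    {A : Finset (Fin N)} (hA : IsShell G m A) {τ : Fin (m + 2) → Fin N}
    (hτ : Function.Injective τ) (hτA : ∀ i, τ i ∈ A) (i : Fin (m + 2)) :
    OrdSimp G (τ ∘ i.succAbove) := by
  have hinj : Function.Injective (τ ∘ i.succAbove) := hτ.comp Fin.succAbove_right_injective
  refine ⟨hinj, hA.2 _ ?_ ?_⟩
  · simpa [Finset.image_subset_iff] using fun k => hτA _
  · simp [Finset.card_image_of_injective _ hinj]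

section Flower

variable {N m : ℕ} {R : Type} [AddCommGroup R]

def elementaryCochain (e : Fin m → Fin N) (r : R) : (Fin m → Fin N) → R :=
  detCochain (fun v l => if e l = v then 1 else 0) r

theorem elementaryCochain_self {e : Fin m → Fin N} (he : Function.Injective e) (r : R) :
    elementaryCochain e r e = r := by
  have h1 : (Matrix.of fun i l => if e l = e i then (1 : ℤ) else 0) = 1 := by
    ext i l
    simp [Matrix.one_apply, he.eq_iff, eq_comm]
  rw [elementaryCochain, detCochain, h1, Matrix.det_one, one_smul]

theorem elementaryCochain_eq_zero {e σ : Fin m → Fin N} {x : Fin N} (hx : x ∉ Set.range e)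
    (hσ : x ∈ Set.range σ) (r : R) : elementaryCochain e r σ = 0 := by
  obtain ⟨i, rfl⟩ := hσ
  exact detCochain_eq_zero_of_row (funext fun l => if_neg fun h => hx ⟨l, h⟩)

/-- Supported on the flower `F(K, C)`, where `C` is the image of `e`. -/
def flowerCocycle (K : Finset (Fin N)) (e : Fin m → Fin N) (r : R) :
    (Fin (m + 1) → Fin N) → R :=
  fun σ => if ∀ i, σ i ∈ K then delta (elementaryCochain e r) σ else 0

variable {G : Set (Finset (Fin N))} {K : Finset (Fin N)} {e : Fin m → Fin N} {r : R}

theorem flowerCocycle_ne_zero {σ : Fin (m + 1) → Fin N} (h : flowerCocycle K e r σ ≠ 0) :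
    Function.Injective σ ∧ (∀ i, σ i ∈ K) ∧ ∀ l, e l ∈ Set.range σ := by
  by_cases hK : ∀ i, σ i ∈ K
  · rw [flowerCocycle, if_pos hK, elementaryCochain, delta_detCochain] at h
    refine ⟨injective_of_detCochain_ne_zero h, hK, fun l => ?_⟩
    by_contra hl
    exact h (detCochain_eq_zero_of_column (l := l.succ) fun i =>
      (Fin.cons_succ _ _ _).trans (if_neg fun he => hl ⟨i, he.symm⟩))
  · exact absurd (if_neg hK) h

theorem isCochain_flowerCocycle (hG : IsComplex G) (hK : K ∈ G) :
    IsCochain G (m + 1) (flowerCocycle K e r) := by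
  refine ⟨fun σ hσ => ?_, fun σ a b hab => ?_⟩
  · by_contra h
    obtain ⟨hinj, hσK, -⟩ := flowerCocycle_ne_zero h
    refine hσ ⟨hinj, hG.2.2 K hK _ ?_ (Finset.univ_nonempty.image σ)⟩
    simpa [Finset.image_subset_iff] using hσK
  · have hK' : (∀ i, (σ ∘ Equiv.swap a b) i ∈ K) ↔ ∀ i, σ i ∈ K :=
      ((Equiv.swap a b).forall_congr_left (p := fun i => σ i ∈ K)).symm
    simp only [flowerCocycle, hK', elementaryCochain, delta_detCochain]
    split_ifs
    · exact detCochain_comp_swap σ hab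
    · exact neg_zero.symm

theorem flowerCocycle_comp_succAbove_eq_zero
    (hM : ∀ w ∈ K, w ∉ Finset.image e Finset.univ →
      KLocalised G K (insert w (Finset.image e Finset.univ)))
    {τ : Fin (m + 2) → Fin N} (hτ : OrdSimp G τ) (hτK : ¬ ∀ i, τ i ∈ K)
    (i : Fin (m + 2)) :
    flowerCocycle K e r (τ ∘ i.succAbove) = 0 := by
  by_contra h
  obtain ⟨hinj, hfaceK, hC⟩ := flowerCocycle_ne_zero h
  obtain ⟨k, hk⟩ : ∃ k, τ (i.succAbove k) ∉ Finset.image e Finset.univ := by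
    by_contra! hall
    have hsub : Finset.image (τ ∘ i.succAbove) Finset.univ ⊆ Finset.image e Finset.univ := by
      simpa [Finset.image_subset_iff] using hall
    have := (Finset.card_le_card hsub).trans Finset.card_image_le
    rw [Finset.card_image_of_injective _ hinj] at this
    simp at this
  have hpetal : insert (τ (i.succAbove k)) (Finset.image e Finset.univ) ⊆
      Finset.image τ Finset.univ := by
    refine Finset.insert_subset (Finset.mem_image_of_mem _ (Finset.mem_univ _)) ?_
    rw [Finset.image_subset_iff]
    intro l _
    obtain ⟨k', hk'⟩ := hC l
    exact hk' ▸ Finset.mem_image_of_mem _ (Finset.mem_univ _)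
  exact hτK fun i' => hM _ (hfaceK k) hk _ hτ.2 hpetal
    (Finset.mem_image_of_mem _ (Finset.mem_univ i'))

theorem isCocycle_flowerCocycle (hG : IsComplex G) (hK : K ∈ G)
    (hM : ∀ w ∈ K, w ∉ Finset.image e Finset.univ →
      KLocalised G K (insert w (Finset.image e Finset.univ))) :
    IsCocycle G (m + 1) (flowerCocycle K e r) := by
  refine ⟨isCochain_flowerCocycle hG hK, fun τ hτ => ?_⟩
  by_cases hτK : ∀ i, τ i ∈ K
  · rw [delta_congr (g := delta (elementaryCochain e r)) fun i => if_pos fun k => hτK _]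
    exact delta_delta _ τ
  · exact Finset.sum_eq_zero fun i _ => by
      rw [flowerCocycle_comp_succAbove_eq_zero hM hτ hτK i, smul_zero]

theorem not_isCobound_flowerCocycle (he : Function.Injective e) (heK : ∀ l, e l ∈ K)
    {w a : Fin N} (hw : w ∈ K) (hwe : w ∉ Set.range e) (ha : a ∉ K)
    (hshell : IsShell G m (insert a (insert w (Finset.image e Finset.univ)))) (hr : r ≠ 0) :
    ¬ IsCobound G m (flowerCocycle K e r) := by
  rintro ⟨g, -, hg⟩
  have hwK : ∀ i, (Fin.cons w e : Fin (m + 1) → Fin N) i ∈ K := Fin.cases hw heK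
  have hτ : Function.Injective (Fin.cons a (Fin.cons w e) : Fin (m + 2) → Fin N) :=
    Fin.cons_injective_iff.2
      ⟨fun ⟨i, hi⟩ => ha (hi ▸ hwK i), Fin.cons_injective_iff.2 ⟨hwe, he⟩⟩
  have hfaces := ordSimp_comp_succAbove_of_isShell hshell hτ
    (Fin.cases (by simp) (Fin.cases (by simp) fun l => by simp))
  have hzero : delta (flowerCocycle K e r) (Fin.cons a (Fin.cons w e)) = 0 := by
    rw [delta_congr fun i => hg _ (hfaces i)]
    exact delta_delta g _
  rw [delta_cons (fun σ ⟨i, hi⟩ => if_neg fun hσ => ha (hi ▸ hσ i)), flowerCocycle,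
    if_pos hwK, delta_cons (fun σ hσ => elementaryCochain_eq_zero hwe hσ r),
    elementaryCochain_self he] at hzero
  exact hr hzero

end Flower

theorem minimal_obstruction_general
    (j k N : ℕ)
    (R : Type) [AddCommGroup R] [Nontrivial R]
    (G : Set (Finset (Fin N))) (hG : IsComplex G)
    (K C : Finset (Fin N)) (w a : Fin N) (h : IsCopyMhat G j k K C w a) :
    ¬ HTrivial G R j := by
  obtain ⟨⟨hKG, -, hCK, hCcard, hM, -⟩, hwK, hwC, haK, hshell, -⟩ := h
  obtain ⟨e, he, rfl⟩ : ∃ e : Fin j → Fin N, Function.Injective e ∧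
      Finset.image e Finset.univ = C :=
    ⟨_, (C.orderEmbOfFin hCcard).injective, C.image_orderEmbOfFin_univ hCcard⟩
  have heK : ∀ l, e l ∈ K := fun l => hCK (Finset.mem_image_of_mem e (Finset.mem_univ l))
  have hwe : w ∉ Set.range e := by simpa using hwC
  have hpetals : ∀ v ∈ K, v ∉ Finset.image e Finset.univ →
      KLocalised G K (insert v (Finset.image e Finset.univ)) :=
    fun v hv hvC σ hσ hsub => hM σ hσ ⟨v, hv, hvC, hsub⟩
  obtain ⟨r, hr⟩ := exists_ne (0 : R)
  exact fun htriv => not_isCobound_flowerCocycle he heK hwK hwe haK hshell hr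
    (htriv _ (isCocycle_flowerCocycle hG hKG hpetals))

/-- **Minimal obstructions obstruct cohomological connectedness** (Corollary 4.11).
If a simplicial complex `G` contains a copy `(K,C,w,a)` of `M̂_{j,k}`, then
`H^j(G;R) ≠ 0`. -/
theorem minimal_obstruction
    (d j k N : ℕ) (hd : 2 ≤ d) (hj : 1 ≤ j) (hjd : j ≤ d - 1)
    (hk1 : j ≤ k) (hk2 : k ≤ d)
    (R : Type) [AddCommGroup R] [Nontrivial R]
    (G : Set (Finset (Fin N))) (hG : IsComplex G)
    (K C : Finset (Fin N)) (w a : Fin N) (h : IsCopyMhat G j k K C w a) :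
    ¬ HTrivial G R j :=
  minimal_obstruction_general j k N R G hG K C w a h

end RSC
end

section
/- Meshulam–Wallach expansion bound over an arbitrary abelian group. Let j ≥ 1, let n ≥ j+2, and let Δ be the complete complex on [n], i.e. the family of all non-empty subsets of [n] (the downward closure of the (n−1)-simplex). Let f be a j-cochain of Δ with support S, and suppose that for every (j−1)-cochain g of Δ, the support of f + δ^{j−1}g has cardinality at least |S|. Then |D(f)| ≥ (n/(j+2))·|S|, where D(f) denotes the support of δ^j f, i.e. the set of unordered (j+1)-simplices of Δ on which δ^j f is non-zero. -/
open MeasureTheory Filter Finset Asymptotics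
open scoped Classical

namespace RSC

/-!
Coning `f` off at a vertex `v` gives a `(j-1)`-cochain `g` with `(f + δ g)(σ) = (δ f)(v σ)`,
which vanishes whenever `v ∈ σ`. So `A ↦ A ∪ {v}` injects `supp (f + δ g)` into the simplices
of `D(f)` through `v`, and minimality gives `|supp f| ≤ #{B ∈ D(f) | v ∈ B}`. Summing over the
`n` vertices counts every `(j+1)`-simplex of `D(f)` exactly `j + 2` times.
-/

variable {n : ℕ} {R : Type} [AddCommGroup R] {G : Set (Finset (Fin n))} {m : ℕ}

section Cochain

variable {f : (Fin m → Fin n) → R}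

theorem IsCochain.apply_eq_zero_of_not_injective (hf : IsCochain G m f)
    {σ : Fin m → Fin n} (hσ : ¬ Function.Injective σ) : f σ = 0 :=
  hf.1 σ fun h => hσ h.1

theorem IsCochain.apply_comp_perm (hf : IsCochain G m f) (π : Equiv.Perm (Fin m))
    (σ : Fin m → Fin n) : f (σ ∘ π) = (Equiv.Perm.sign π : ℤ) • f σ := by
  induction π using Equiv.Perm.swap_induction_on generalizing σ with
  | one => simp
  | swap_mul π a b hab ih =>
    rw [Equiv.Perm.coe_mul, ← Function.comp_assoc, ih, hf.2 σ a b hab, map_mul,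
      Equiv.Perm.sign_swap hab]
    simp

end Cochain

theorem card_of_mem_cochainSupport {g : (Fin m → Fin n) → R} {A : Finset (Fin n)}
    (hA : A ∈ cochainSupport g) : A.card = m := by
  obtain ⟨σ, hσ, rfl, -⟩ := hA
  rw [Finset.card_image_of_injective _ hσ, Finset.card_univ, Fintype.card_fin]

/-- The sign makes `f + δ (cone v f)` the pullback of `δ f` along `Fin.cons v` (`delta_cons`). -/
def cone (v : Fin n) (f : (Fin (m + 1) → Fin n) → R) : (Fin m → Fin n) → R :=
  fun τ => -f (Fin.cons v τ)

theorem delta_cons_s19 (f : (Fin (m + 1) → Fin n) → R) (v : Fin n)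
    (σ : Fin (m + 1) → Fin n) : delta f (Fin.cons v σ) = (f + delta (cone v f)) σ := by
  simp only [delta, cone, Pi.add_apply, Fin.sum_univ_succ (n := m + 1)]
  congr 1
  · simp [Fin.cons_comp_succ]
  · refine Finset.sum_congr rfl fun i _ => ?_
    have hface : (Fin.cons v σ : Fin (m + 2) → Fin n) ∘ i.succ.succAbove =
        Fin.cons v (σ ∘ i.succAbove) := by
      ext k
      cases k using Fin.cases <;> simp
    rw [hface, Fin.val_succ, pow_succ, mul_smul]
    simp

theorem IsCochain.delta_cone_of_apply_eq {f : (Fin (m + 1) → Fin n) → R}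
    (hf : IsCochain G (m + 1) f) {v : Fin n}
    {σ : Fin (m + 1) → Fin n} {k : Fin (m + 1)} (hk : σ k = v) :
    delta (cone v f) σ = -f σ := by
  rw [delta, Finset.sum_eq_single k]
  · rw [cone, ← hk, show Fin.cons (σ k) (σ ∘ k.succAbove) = σ ∘ k.cycleRange.symm from
      Fin.cons_removeNth_eq_comp_cycleRange_symm σ k, hf.apply_comp_perm, Equiv.Perm.sign_symm,
      Fin.sign_cycleRange, smul_neg, smul_smul]
    simp [← pow_add, ← two_mul, pow_mul]
  · intro i _ hik
    obtain ⟨l, hl⟩ := Fin.exists_succAbove_eq (Ne.symm hik)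
    have hrep : (Fin.cons v (σ ∘ i.succAbove) : Fin (m + 1) → Fin n) l.succ =
        (Fin.cons v (σ ∘ i.succAbove) : Fin (m + 1) → Fin n) 0 := by simp [hl, hk]
    rw [cone, hf.apply_eq_zero_of_not_injective fun h => Fin.succ_ne_zero l (h hrep), neg_zero,
      smul_zero]
  · simp

theorem isCochain_cone (hm : 1 ≤ m) {f : (Fin (m + 1) → Fin n) → R}
    (hf : IsCochain {A : Finset (Fin n) | A.Nonempty} (m + 1) f) (v : Fin n) :
    IsCochain {A : Finset (Fin n) | A.Nonempty} m (cone v f) := by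
  refine ⟨fun τ hτ => ?_, fun τ a b hab => ?_⟩
  · have hτ : ¬ Function.Injective τ := fun h =>
      hτ ⟨h, Finset.image_nonempty.2 (Finset.univ_nonempty_iff.2 ⟨⟨0, hm⟩⟩)⟩
    have hcons : ¬ Function.Injective (Fin.cons v τ : Fin (m + 1) → Fin n) := fun h =>
      hτ (by simpa [Fin.cons_comp_succ] using h.comp (Fin.succ_injective m))
    rw [cone, hf.apply_eq_zero_of_not_injective hcons, neg_zero]
  · have hswap : (Fin.cons v (τ ∘ Equiv.swap a b) : Fin (m + 1) → Fin n) =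
        Fin.cons v τ ∘ Equiv.swap a.succ b.succ := by
      ext k
      cases k using Fin.cases with
      | zero =>
        simp [Equiv.swap_apply_of_ne_of_ne (Fin.succ_ne_zero a).symm (Fin.succ_ne_zero b).symm]
      | succ k => simp [(Fin.succ_injective m).swap_apply]
    simp only [cone, hswap, hf.2 _ _ _ ((Fin.succ_injective m).ne hab)]

theorem IsCochain.ncard_support_add_delta_cone_le {f : (Fin (m + 1) → Fin n) → R}
    (hf : IsCochain G (m + 1) f) (v : Fin n) :
    (cochainSupport (f + delta (cone v f))).ncard ≤
      {B ∈ cochainSupport (delta f) | v ∈ B}.ncard := by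
  have hnotin : ∀ A ∈ cochainSupport (f + delta (cone v f)), v ∉ A := by
    rintro A ⟨σ, -, rfl, hne⟩ hv
    obtain ⟨k, -, hk⟩ := Finset.mem_image.1 hv
    exact hne (by rw [Pi.add_apply, hf.delta_cone_of_apply_eq hk, add_neg_cancel])
  refine Set.ncard_le_ncard_of_injOn (insert v) (fun A hA => ?_) (fun A₁ h₁ A₂ h₂ h => ?_)
    (Set.toFinite _)
  · obtain ⟨σ, hσ, rfl, hne⟩ := id hA
    have hvσ : v ∉ Set.range σ := fun ⟨i, hi⟩ =>
      hnotin _ hA (Finset.mem_image.2 ⟨i, Finset.mem_univ i, hi⟩)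
    refine ⟨⟨Fin.cons v σ, Fin.cons_injective_iff.2 ⟨hvσ, hσ⟩, ?_, by rwa [delta_cons_s19]⟩,
      Finset.mem_insert_self v _⟩
    ext b
    simp [Fin.exists_fin_succ, eq_comm]
  · simpa [Finset.erase_insert (hnotin _ h₁), Finset.erase_insert (hnotin _ h₂)] using
      congrArg (Finset.erase · v) h

theorem card_mul_le_mul_ncard_of_le_ncard_mem {α : Type*} [Fintype α] {𝒟 : Set (Finset α)}
    {k c : ℕ} (hk : ∀ B ∈ 𝒟, B.card = k) (hc : ∀ a, c ≤ {B ∈ 𝒟 | a ∈ B}.ncard) :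
    Fintype.card α * c ≤ k * 𝒟.ncard := by
  set s := (Set.toFinite 𝒟).toFinset
  have hmem : ∀ a, {B ∈ 𝒟 | a ∈ B} = ↑{B ∈ s | a ∈ B} := fun a => by ext; simp [s]
  calc Fintype.card α * c ≤ ∑ B ∈ s, B.card :=
        Finset.le_sum_card fun a => by rw [← Set.ncard_coe_finset, ← hmem]; exact hc a
    _ = k * 𝒟.ncard := by
        rw [Finset.sum_congr rfl fun B hB => hk B ((Set.Finite.mem_toFinset _).1 hB),
          Finset.sum_const, smul_eq_mul, mul_comm, Set.ncard_eq_toFinset_card 𝒟]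

theorem meshulam_wallach_general
    (j n : ℕ) (hj : 1 ≤ j)
    (R : Type) [AddCommGroup R]
    (f : (Fin (j + 1) → Fin n) → R)
    (hf : IsCochain {A : Finset (Fin n) | A.Nonempty} (j + 1) f)
    (hmin : ∀ g : (Fin j → Fin n) → R,
      IsCochain {A : Finset (Fin n) | A.Nonempty} j g →
      (cochainSupport f).ncard ≤ (cochainSupport (f + delta g)).ncard) :
    ((n : ℝ) / ((j : ℝ) + 2)) * (cochainSupport f).ncard ≤
      ((cochainSupport (delta f)).ncard : ℝ) := by
  have hdegree : ∀ v : Fin n,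
      (cochainSupport f).ncard ≤ {B ∈ cochainSupport (delta f) | v ∈ B}.ncard := fun v =>
    (hmin _ (isCochain_cone hj hf v)).trans (hf.ncard_support_add_delta_cone_le v)
  have hcount : n * (cochainSupport f).ncard ≤ (j + 2) * (cochainSupport (delta f)).ncard := by
    simpa using card_mul_le_mul_ncard_of_le_ncard_mem
      (fun B hB => card_of_mem_cochainSupport hB) hdegree
  rw [div_mul_eq_mul_div, div_le_iff₀ (by positivity)]
  exact_mod_cast hcount.trans_eq (mul_comm _ _)

/-- **Meshulam–Wallach expansion bound over an arbitrary abelian group**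
(Proposition 5.7). Let `Δ` be the complete complex on `[n]` with `n ≥ j+2`, and let
`f` be a `j`-cochain of `Δ` whose support has minimal cardinality in its class
modulo coboundaries. Then `|D(f)| ≥ (n/(j+2)) |supp(f)|`. -/
theorem meshulam_wallach
    (j n : ℕ) (hj : 1 ≤ j) (hn : j + 2 ≤ n)
    (R : Type) [AddCommGroup R] [Nontrivial R]
    (f : (Fin (j + 1) → Fin n) → R)
    (hf : IsCochain {A : Finset (Fin n) | A.Nonempty} (j + 1) f)
    (hmin : ∀ g : (Fin j → Fin n) → R,
      IsCochain {A : Finset (Fin n) | A.Nonempty} j g →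
      (cochainSupport f).ncard ≤ (cochainSupport (f + delta g)).ncard) :
    ((n : ℝ) / ((j : ℝ) + 2)) * (cochainSupport f).ncard ≤
      ((cochainSupport (delta f)).ncard : ℝ) :=
  meshulam_wallach_general j n hj R f hf hmin

end RSC
end
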